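/- If A is a commutative ring, S ⊆ A multiplicatively closed, a an ideal of A, then the quotient A/a is S̄-noetherian whenever A is S-noetherian, where S̄ is the image of S in A/a. -/

import Mathlib

/-- A submodule `N` is `S`-finite if there is a finitely generated submodule `F ⊆ N`
and `s ∈ S` with `N • s ⊆ F`. -/
def SFin {A : Type*} [CommRing A] (S : Submonoid A) {M : Type*} [AddCommGroup M]
    [Module A M] (N : Submodule A M) : Prop :=
  ∃ F : Submodule A M, F.FG ∧ F ≤ N ∧ ∃ s ∈ S, ∀ x ∈ N, s • x ∈ F

/-- A module `M` is `S`-noetherian if every submodule is `S`-finite. -/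
def SNoeth {A : Type*} [CommRing A] (S : Submonoid A) (M : Type*) [AddCommGroup M]
    [Module A M] : Prop :=
  ∀ N : Submodule A M, SFin S N

theorem SFin.map {A B : Type*} [CommRing A] [CommRing B] (f : A →+* B) {S : Submonoid A}
    {I : Ideal A} (hI : SFin S I) : SFin (S.map f) (I.map f) := by
  obtain ⟨F, hFG, hFI, s, hs, hsF⟩ := hI
  have hsIF : Ideal.span {s} * I ≤ F := Ideal.mul_le.mpr fun t ht x hx => by
    obtain ⟨r, rfl⟩ := Ideal.mem_span_singleton'.mp ht
    simpa [mul_assoc] using F.smul_mem r (hsF x hx)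
  refine ⟨Ideal.map f F, Ideal.FG.map hFG f, Ideal.map_mono hFI, f s, ⟨s, hs, rfl⟩,
    fun y hy => ?_⟩
  have hmul : Ideal.map f (Ideal.span {s}) * I.map f ≤ Ideal.map f F := by
    rw [← Ideal.map_mul]
    exact Ideal.map_mono hsIF
  refine hmul (Ideal.mul_mem_mul ?_ hy)
  rw [Ideal.map_span, Set.image_singleton]
  exact Ideal.mem_span_singleton_self _

theorem SNoeth.of_surjective {A B : Type*} [CommRing A] [CommRing B] {f : A →+* B}
    (hf : Function.Surjective f) {S : Submonoid A} (hA : SNoeth S A) : SNoeth (S.map f) B := by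
  intro J
  rw [← Ideal.map_comap_of_surjective f hf J]
  exact (hA (Ideal.comap f J)).map f

theorem stmt5 {A : Type*} [CommRing A] (S : Submonoid A) (a : Ideal A)
    (hA : SNoeth S A) : SNoeth (S.map (Ideal.Quotient.mk a)) (A ⧸ a) :=
  hA.of_surjective Ideal.Quotient.mk_surjective
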